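/- Let c ∈ ℝ and Ū, D ∈ ℝ² with |D₁+D₂| < 1, and let M(D) denote the 2×2 matrix with diagonal entries 1 and off-diagonal entries −(D₁+D₂). Then the supremum over U ∈ ℝ² of 𝓛(U, D, Ū) is attained and equals ½ ⟨M(D)⁻¹ w, w⟩ − ½ |(c,c) − Ū|², where w = D − Ū + (c,c). -/

import Mathlib

open Matrix

/-- The toy-model pre-dual Lagrangian
`𝓛(U,D,Ū) = (U₁−c)(U₂−c)(D₁+D₂) − (U₁−c)D₁ − (U₂−c)D₂ − ½|U−Ū|²`. -/
noncomputable def Ltoy (c : ℝ) (U D Ub : ℝ × ℝ) : ℝ :=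
  (U.1 - c) * (U.2 - c) * (D.1 + D.2) - (U.1 - c) * D.1 - (U.2 - c) * D.2
    - (1 / 2) * ((U.1 - Ub.1) ^ 2 + (U.2 - Ub.2) ^ 2)

/-- The matrix `M(D)` with diagonal entries `1` and off-diagonal entries `−(D₁+D₂)`. -/
def Mtoy (D : ℝ × ℝ) : Matrix (Fin 2) (Fin 2) ℝ :=
  !![1, -(D.1 + D.2); -(D.1 + D.2), 1]


/-!
Writing `V = U - (c,c)`, the Lagrangian is the concave quadratic
`-½⟨M(D) V, V⟩ - ⟨V, w⟩ - ½|(c,c) - Ū|²`, and `M(D)` is positive definite when `|D₁+D₂| < 1`.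
Completing the square, `-½⟨M V, V⟩ - ⟨V, w⟩ = ½⟨M⁻¹ w, w⟩ - ½⟨M (V + M⁻¹ w), V + M⁻¹ w⟩`,
so the maximum is `½⟨M⁻¹ w, w⟩`, attained at `V = -M⁻¹ w`.
-/

namespace Matrix

variable {n : Type*} [Fintype n] [DecidableEq n]

theorem IsHermitian.neg_half_mulVec_dotProduct_sub_eq {M : Matrix n n ℝ} (hM : M.IsHermitian)
    (hM' : IsUnit M) (v w : n → ℝ) :
    -(1 / 2) * (M *ᵥ v ⬝ᵥ v) - v ⬝ᵥ w =
      (1 / 2) * (M⁻¹ *ᵥ w ⬝ᵥ w) - (1 / 2) * (M *ᵥ (v + M⁻¹ *ᵥ w) ⬝ᵥ (v + M⁻¹ *ᵥ w)) := by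
  have hMinv : M * M⁻¹ = 1 := mul_nonsing_inv _ ((isUnit_iff_isUnit_det M).mp hM')
  have hT : Mᵀ = M := by simpa using hM.eq
  have hcross : M *ᵥ v ⬝ᵥ M⁻¹ *ᵥ w = v ⬝ᵥ w := by
    rw [dotProduct_comm, dotProduct_mulVec, ← mulVec_transpose, hT, mulVec_mulVec, hMinv,
      one_mulVec, dotProduct_comm]
  rw [mulVec_add, mulVec_mulVec, hMinv, one_mulVec, add_dotProduct, dotProduct_add,
    dotProduct_add, hcross, dotProduct_comm w v, dotProduct_comm w]
  ring

theorem PosDef.isGreatest_range_neg_half_mulVec_dotProduct_sub {M : Matrix n n ℝ}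
    (hM : M.PosDef) (w : n → ℝ) :
    IsGreatest (Set.range fun v => -(1 / 2) * (M *ᵥ v ⬝ᵥ v) - v ⬝ᵥ w)
      ((1 / 2) * (M⁻¹ *ᵥ w ⬝ᵥ w)) := by
  have hsq := hM.isHermitian.neg_half_mulVec_dotProduct_sub_eq hM.isUnit
  refine ⟨⟨-(M⁻¹ *ᵥ w), (hsq _ w).trans (by simp)⟩, ?_⟩
  rintro _ ⟨v, rfl⟩
  have hnonneg := hM.posSemidef.dotProduct_mulVec_nonneg (v + M⁻¹ *ᵥ w)
  rw [star_trivial, dotProduct_comm] at hnonneg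
  linarith [hsq v w]

theorem posDef_one_neg_neg_one {a : ℝ} (ha : |a| < 1) :
    (!![1, -a; -a, 1] : Matrix (Fin 2) (Fin 2) ℝ).PosDef := by
  refine PosDef.of_dotProduct_mulVec_pos ?_ fun x hx => ?_
  · ext i j
    fin_cases i <;> fin_cases j <;> simp
  · have ha2 : 0 < 1 - a ^ 2 := sub_pos.2 ((sq_lt_one_iff_abs_lt_one a).2 ha)
    simp only [star_trivial, dotProduct, mulVec, Fin.sum_univ_two, of_apply, cons_val',
      cons_val_zero, cons_val_one, empty_val', cons_val_fin_one]
    rcases Fin.exists_fin_two.1 (Function.ne_iff.1 hx) with hi | hi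
    · nlinarith [sq_nonneg (x 1 - a * x 0), mul_pos ha2 (sq_pos_of_ne_zero hi)]
    · nlinarith [sq_nonneg (x 0 - a * x 1), mul_pos ha2 (sq_pos_of_ne_zero hi)]

end Matrix

theorem Ltoy_eq_neg_half_mulVec_dotProduct_sub (c : ℝ) (U D Ub : ℝ × ℝ) :
    Ltoy c U D Ub = -(1 / 2) * (Mtoy D *ᵥ ![U.1 - c, U.2 - c] ⬝ᵥ ![U.1 - c, U.2 - c])
      - ![U.1 - c, U.2 - c] ⬝ᵥ ![D.1 - Ub.1 + c, D.2 - Ub.2 + c]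
      - (1 / 2) * ((c - Ub.1) ^ 2 + (c - Ub.2) ^ 2) := by
  simp [Ltoy, Mtoy, mulVec, dotProduct, Fin.sum_univ_two]
  ring

/-- if `|D₁+D₂| < 1` then `sup_U 𝓛(U,D,Ū)` is attained and equals
`½⟨M(D)⁻¹ w, w⟩ − ½|(c,c)−Ū|²` where `w = D − Ū + (c,c)`. -/
theorem stmt12 (c : ℝ) (Ub D : ℝ × ℝ) (hD : |D.1 + D.2| < 1) :
    IsGreatest (Set.range fun U : ℝ × ℝ => Ltoy c U D Ub)
      ((1 / 2) * ((Mtoy D)⁻¹.mulVec ![D.1 - Ub.1 + c, D.2 - Ub.2 + c]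
          ⬝ᵥ ![D.1 - Ub.1 + c, D.2 - Ub.2 + c])
        - (1 / 2) * ((c - Ub.1) ^ 2 + (c - Ub.2) ^ 2)) := by
  have hshift : Function.Surjective fun U : ℝ × ℝ => ![U.1 - c, U.2 - c] := fun v =>
    ⟨(v 0 + c, v 1 + c), by ext i; fin_cases i <;> simp⟩
  have hrange : (Set.range fun U : ℝ × ℝ => Ltoy c U D Ub) =
      (· - (1 / 2) * ((c - Ub.1) ^ 2 + (c - Ub.2) ^ 2)) '' Set.range fun v =>
        -(1 / 2) * (Mtoy D *ᵥ v ⬝ᵥ v) - v ⬝ᵥ ![D.1 - Ub.1 + c, D.2 - Ub.2 + c] := by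
    rw [← Set.range_comp, ← hshift.range_comp]
    simp only [Function.comp_def, Ltoy_eq_neg_half_mulVec_dotProduct_sub]
  have hM : (Mtoy D).PosDef := Matrix.posDef_one_neg_neg_one hD
  rw [hrange]
  exact (StrictMono.map_isGreatest fun _ _ h => sub_lt_sub_right h _).2
    (hM.isGreatest_range_neg_half_mulVec_dotProduct_sub _)
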